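/- arXiv:quant-ph/0308167 — 3 statements merged into one kernel-verified Lean document; each statement's English description precedes it below -/
import Mathlib

section
/- A 4×4 unitary U is generated by 2 applications of Uf(π/2) (the CNOT gate, up to local equivalence) together with local gates if and only if there exist real numbers c1 ≥ c2 ≥ 0 with c1 + c2 ≤ π such that U is locally equivalent to A(c1, c2, 0). In other words, two applications of the CNOT gate implement exactly those two-qubit gates whose canonical class has c3 = 0, and only those gates. -/
set_option maxHeartbeats 4000000
set_option linter.unnecessarySeqFocus false

open Matrix Kronecker

noncomputable section

/-- The Pauli matrix `σx`. -/
def σx : Matrix (Fin 2) (Fin 2) ℂ := !![0, 1; 1, 0]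

/-- The Pauli matrix `σy`. -/
def σy : Matrix (Fin 2) (Fin 2) ℂ := !![0, -Complex.I; Complex.I, 0]

/-- The Pauli matrix `σz`. -/
def σz : Matrix (Fin 2) (Fin 2) ℂ := !![1, 0; 0, -1]

/-- Kronecker (tensor) product of two `2×2` matrices, as a `4×4` matrix, with
the standard index identification `(m, n) ↦ 2*m + n`. -/
def tensor (a b : Matrix (Fin 2) (Fin 2) ℂ) : Matrix (Fin 4) (Fin 4) ℂ :=
  Matrix.reindex finProdFinEquiv finProdFinEquiv (a ⊗ₖ b)

/-- `Uf γ = exp(i (γ/2) σz ⊗ σz)`, representing (up to local equivalence) a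
Controlled-`U` gate. -/
def Uf (γ : ℝ) : Matrix (Fin 4) (Fin 4) ℂ :=
  NormedSpace.exp ((((γ : ℂ) / 2) * Complex.I) • tensor σz σz)

/-- The canonical gate
`A c1 c2 c3 = exp(i (c1/2) σx⊗σx) · exp(i (c2/2) σy⊗σy) · exp(i (c3/2) σz⊗σz)`. -/
def A (c1 c2 c3 : ℝ) : Matrix (Fin 4) (Fin 4) ℂ :=
  NormedSpace.exp ((((c1 : ℂ) / 2) * Complex.I) • tensor σx σx) *
    NormedSpace.exp ((((c2 : ℂ) / 2) * Complex.I) • tensor σy σy) *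
    NormedSpace.exp ((((c3 : ℂ) / 2) * Complex.I) • tensor σz σz)

/-- Membership in `SU(2)`: unitary with determinant one. -/
def IsSU2 (k : Matrix (Fin 2) (Fin 2) ℂ) : Prop :=
  k ∈ Matrix.unitaryGroup (Fin 2) ℂ ∧ k.det = 1

/-- Membership in `SU(4)`: unitary with determinant one. -/
def IsSU4 (U : Matrix (Fin 4) (Fin 4) ℂ) : Prop :=
  U ∈ Matrix.unitaryGroup (Fin 4) ℂ ∧ U.det = 1

/-- A local gate is a tensor product `k1 ⊗ k2` of two `SU(2)` gates. -/
def IsLocalGate (k : Matrix (Fin 4) (Fin 4) ℂ) : Prop :=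
  ∃ k1 k2 : Matrix (Fin 2) (Fin 2) ℂ, IsSU2 k1 ∧ IsSU2 k2 ∧ k = tensor k1 k2

/-- `U` and `V` are locally equivalent if `U = e^{iφ} k V k'` for some real `φ`
and local gates `k`, `k'`. -/
def LocallyEquivalent (U V : Matrix (Fin 4) (Fin 4) ℂ) : Prop :=
  ∃ (φ : ℝ) (k k' : Matrix (Fin 4) (Fin 4) ℂ), IsLocalGate k ∧ IsLocalGate k' ∧
    U = Complex.exp (φ * Complex.I) • (k * V * k')

/-- `circuit W k n = k n * W * k (n-1) * W * ⋯ * W * k 0`: the alternating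
circuit consisting of `n` applications of `W` interleaved with the gates `k i`. -/
def circuit (W : Matrix (Fin 4) (Fin 4) ℂ) (k : ℕ → Matrix (Fin 4) (Fin 4) ℂ) :
    ℕ → Matrix (Fin 4) (Fin 4) ℂ
  | 0 => k 0
  | n + 1 => k (n + 1) * W * circuit W k n

/-- `U` is generated by `n` applications of the gate `W` together with local gates:
`U = e^{iφ} · k_n · W · k_{n-1} · W ⋯ W · k_0` for some real `φ` and local gates `k_i`. -/
def GeneratedBy (W : Matrix (Fin 4) (Fin 4) ℂ) (n : ℕ) (U : Matrix (Fin 4) (Fin 4) ℂ) : Prop :=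
  ∃ (φ : ℝ) (k : ℕ → Matrix (Fin 4) (Fin 4) ℂ),
    (∀ i, i ≤ n → IsLocalGate (k i)) ∧ U = Complex.exp (φ * Complex.I) • circuit W k n

/-! ## Auxiliary material -/

section Aux

open Complex Real

/-! ### Powers of I -/

lemma I2 : Complex.I ^ 2 = -1 := Complex.I_sq
lemma I3 : Complex.I ^ 3 = -Complex.I := by rw [pow_succ, I2]; ring
lemma I4 : Complex.I ^ 4 = 1 := by rw [pow_succ, I3]; simp [Complex.I_mul_I]
lemma I5 : Complex.I ^ 5 = Complex.I := by rw [pow_succ, I4]; ring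

lemma exp_real_mul_I (x : ℝ) :
    Complex.exp ((x : ℂ) * Complex.I) = (Real.cos x : ℂ) + (Real.sin x : ℂ) * Complex.I := by
  rw [Complex.exp_mul_I, Complex.ofReal_cos, Complex.ofReal_sin]

lemma exp_exp (x y : ℝ) :
    Complex.exp ((x : ℂ) * Complex.I) * Complex.exp ((y : ℂ) * Complex.I)
      = (Real.cos (x + y) : ℂ) + (Real.sin (x + y) : ℂ) * Complex.I := by
  rw [← Complex.exp_add, ← add_mul]
  rw [show ((x : ℂ) + y) = ((x + y : ℝ) : ℂ) by push_cast; ring]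
  exact exp_real_mul_I (x + y)

/-! ### tensor basics -/

lemma tensor_mul (a b c d : Matrix (Fin 2) (Fin 2) ℂ) :
    tensor a b * tensor c d = tensor (a*c) (b*d) := by
  simp only [tensor, reindex_apply, Matrix.mul_kronecker_mul]
  rw [Matrix.submatrix_mul_equiv]

lemma tensor_one : tensor 1 1 = (1 : Matrix (Fin 4) (Fin 4) ℂ) := by
  simp [tensor, Matrix.one_kronecker_one, Matrix.submatrix_one_equiv]

lemma tensor_smul_left (r : ℂ) (a b : Matrix (Fin 2) (Fin 2) ℂ) :
    tensor (r • a) b = r • tensor a b := by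
  simp [tensor, Matrix.smul_kronecker, Matrix.submatrix_smul]

lemma tensor_smul_right (r : ℂ) (a b : Matrix (Fin 2) (Fin 2) ℂ) :
    tensor a (r • b) = r • tensor a b := by
  simp [tensor, Matrix.kronecker_smul, Matrix.submatrix_smul]

lemma tensor_star (a b : Matrix (Fin 2) (Fin 2) ℂ) :
    star (tensor a b) = tensor (star a) (star b) := by
  ext i j
  simp [tensor, Matrix.star_apply, Matrix.conjTranspose_apply, kroneckerMap_apply]

lemma tensor_ex (a b c d e f g h : ℂ) :
    tensor !![a,b;c,d] !![e,f;g,h] =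
      !![a*e,a*f,b*e,b*f; a*g,a*h,b*g,b*h; c*e,c*f,d*e,d*f; c*g,c*h,d*g,d*h] := by
  ext i j
  fin_cases i <;> fin_cases j <;> simp [tensor, kroneckerMap_apply] <;> rfl

/-! ### Pauli tensor squares and explicit forms -/

lemma XXm_eq : tensor σx σx = !![0,0,0,1; 0,0,1,0; 0,1,0,0; 1,0,0,0] := by
  rw [σx, tensor_ex]; ext i j; fin_cases i <;> fin_cases j <;> norm_num

lemma YYm_eq : tensor σy σy = !![0,0,0,-1; 0,0,1,0; 0,1,0,0; -1,0,0,0] := by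
  rw [σy, tensor_ex]; ext i j; fin_cases i <;> fin_cases j <;> norm_num [Complex.I_mul_I]

lemma ZZm_eq : tensor σz σz = !![1,0,0,0; 0,-1,0,0; 0,0,-1,0; 0,0,0,1] := by
  rw [σz, tensor_ex]; ext i j; fin_cases i <;> fin_cases j <;> norm_num

lemma XXm_sq : tensor σx σx * tensor σx σx = 1 := by
  rw [XXm_eq]; ext i j; fin_cases i <;> fin_cases j <;>
    simp [Matrix.mul_apply, Fin.sum_univ_four, Matrix.one_apply, Matrix.vecHead, Matrix.vecTail]

lemma YYm_sq : tensor σy σy * tensor σy σy = 1 := by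
  rw [YYm_eq]; ext i j; fin_cases i <;> fin_cases j <;>
    simp [Matrix.mul_apply, Fin.sum_univ_four, Matrix.one_apply, Matrix.vecHead, Matrix.vecTail]

lemma ZZm_sq : tensor σz σz * tensor σz σz = 1 := by
  rw [ZZm_eq]; ext i j; fin_cases i <;> fin_cases j <;>
    simp [Matrix.mul_apply, Fin.sum_univ_four, Matrix.one_apply, Matrix.vecHead, Matrix.vecTail]

/-! ### The exponential of i t M for M² = 1 -/

lemma exp_smul_sq_one (M : Matrix (Fin 4) (Fin 4) ℂ) (h : M * M = 1) (t : ℝ) :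
    NormedSpace.exp (((t : ℂ) * Complex.I) • M) =
      (Real.cos t : ℂ) • (1 : Matrix (Fin 4) (Fin 4) ℂ) + ((Real.sin t : ℂ) * Complex.I) • M := by
  have hsq : M ^ 2 = 1 := by rw [pow_two, h]
  have heven : ∀ k : ℕ, M ^ (2 * k) = 1 := fun k => by rw [pow_mul, hsq, one_pow]
  have hodd : ∀ k : ℕ, M ^ (2 * k + 1) = M := fun k => by rw [pow_succ, heven, one_mul]
  set z : ℂ := (t : ℂ) * Complex.I with hz
  have hzpow_even : ∀ k : ℕ, z ^ (2 * k) = ((-1 : ℂ)) ^ k * (t : ℂ) ^ (2 * k) := by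
    intro k
    rw [hz, mul_pow, pow_mul, pow_mul, Complex.I_sq]; ring
  have hzpow_odd : ∀ k : ℕ, z ^ (2 * k + 1) = ((-1 : ℂ)) ^ k * (t : ℂ) ^ (2 * k + 1) * Complex.I := by
    intro k
    rw [pow_succ, hzpow_even, hz]; ring
  have hcos := (Complex.hasSum_cos ((t : ℂ))).summable
  have hsin := ((Complex.hasSum_sin ((t : ℂ))).mul_right Complex.I).summable
  have hcs : Summable fun k : ℕ => z ^ (2 * k) / ((2 * k).factorial : ℂ) :=
    hcos.congr fun k => by rw [hzpow_even]
  have hss : Summable fun k : ℕ => z ^ (2 * k + 1) / ((2 * k + 1).factorial : ℂ) :=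
    hsin.congr fun k => by rw [hzpow_odd]; ring
  have hterm : ∀ n : ℕ, ((n.factorial : ℂ))⁻¹ • (z • M) ^ n
      = (z ^ n / (n.factorial : ℂ)) • M ^ n := by
    intro n
    rw [smul_pow, smul_smul, div_eq_mul_inv, mul_comm]
  have hse : Summable fun k : ℕ => (z ^ (2 * k) / ((2 * k).factorial : ℂ)) • M ^ (2 * k) := by
    simp only [heven]; exact hcs.smul_const _
  have hso : Summable fun k : ℕ => (z ^ (2 * k + 1) / ((2 * k + 1).factorial : ℂ)) • M ^ (2 * k + 1) := by
    simp only [hodd]; exact hss.smul_const _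
  calc NormedSpace.exp (z • M)
      = ∑' n : ℕ, (z ^ n / (n.factorial : ℂ)) • M ^ n := by
        rw [NormedSpace.exp_eq_tsum ℂ]; exact tsum_congr hterm
    _ = (∑' k : ℕ, (z ^ (2*k) / ((2*k).factorial : ℂ)) • M ^ (2*k))
        + ∑' k : ℕ, (z ^ (2*k+1) / ((2*k+1).factorial : ℂ)) • M ^ (2*k+1) := by
        exact (tsum_even_add_odd (f := fun n => (z ^ n / (n.factorial : ℂ)) • M ^ n) hse hso).symm
    _ = (Real.cos t : ℂ) • (1 : Matrix (Fin 4) (Fin 4) ℂ) + ((Real.sin t : ℂ) * Complex.I) • M := by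
        congr 1
        · simp only [heven]
          rw [hcs.tsum_smul_const]
          congr 1
          rw [Complex.ofReal_cos, ← (Complex.hasSum_cos ((t:ℂ))).tsum_eq]
          exact tsum_congr fun k => by rw [hzpow_even]
        · simp only [hodd]
          rw [hss.tsum_smul_const]
          congr 1
          rw [Complex.ofReal_sin, ← ((Complex.hasSum_sin ((t:ℂ))).mul_right Complex.I).tsum_eq]
          exact tsum_congr fun k => by rw [hzpow_odd]; ring

/-! ### Closed forms for Uf and A -/

lemma Uf_eq (γ : ℝ) :
    Uf γ = (Real.cos (γ/2) : ℂ) • (1 : Matrix (Fin 4) (Fin 4) ℂ)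
      + ((Real.sin (γ/2) : ℂ) * Complex.I) • tensor σz σz := by
  rw [Uf, show ((γ : ℂ) / 2) = (((γ/2 : ℝ) : ℂ)) by push_cast; ring]
  exact exp_smul_sq_one _ ZZm_sq (γ/2)

lemma A0_eq (c1 c2 : ℝ) :
    A c1 c2 0 =
      ((Real.cos (c1/2) : ℂ) • (1 : Matrix (Fin 4) (Fin 4) ℂ)
        + ((Real.sin (c1/2) : ℂ) * Complex.I) • tensor σx σx) *
      ((Real.cos (c2/2) : ℂ) • (1 : Matrix (Fin 4) (Fin 4) ℂ)
        + ((Real.sin (c2/2) : ℂ) * Complex.I) • tensor σy σy) := by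
  rw [A]
  rw [show (((0:ℝ) : ℂ) / 2 * Complex.I) • tensor σz σz
        = ((((0:ℝ) : ℂ)) * Complex.I) • tensor σz σz by norm_num]
  rw [exp_smul_sq_one _ ZZm_sq 0]
  rw [show ((c1 : ℂ) / 2) = (((c1/2 : ℝ) : ℂ)) by push_cast; ring]
  rw [show ((c2 : ℂ) / 2) = (((c2/2 : ℝ) : ℂ)) by push_cast; ring]
  rw [exp_smul_sq_one _ XXm_sq (c1/2), exp_smul_sq_one _ YYm_sq (c2/2)]
  simp

lemma A0_ex (c1 c2 : ℝ) :
    A c1 c2 0 =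
      !![(Real.cos (c1/2) : ℂ) * Real.cos (c2/2) + Real.sin (c1/2) * Real.sin (c2/2), 0, 0,
           ((Real.sin (c1/2) : ℂ) * Real.cos (c2/2) - Real.cos (c1/2) * Real.sin (c2/2)) * Complex.I;
         0, (Real.cos (c1/2) : ℂ) * Real.cos (c2/2) - Real.sin (c1/2) * Real.sin (c2/2),
           ((Real.sin (c1/2) : ℂ) * Real.cos (c2/2) + Real.cos (c1/2) * Real.sin (c2/2)) * Complex.I, 0;
         0, ((Real.sin (c1/2) : ℂ) * Real.cos (c2/2) + Real.cos (c1/2) * Real.sin (c2/2)) * Complex.I,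
           (Real.cos (c1/2) : ℂ) * Real.cos (c2/2) - Real.sin (c1/2) * Real.sin (c2/2), 0;
         ((Real.sin (c1/2) : ℂ) * Real.cos (c2/2) - Real.cos (c1/2) * Real.sin (c2/2)) * Complex.I, 0, 0,
           (Real.cos (c1/2) : ℂ) * Real.cos (c2/2) + Real.sin (c1/2) * Real.sin (c2/2)] := by
  rw [A0_eq, XXm_eq, YYm_eq]
  ext i j
  fin_cases i <;> fin_cases j <;>
    simp [Matrix.mul_apply, Fin.sum_univ_four, Matrix.one_apply, Matrix.vecHead, Matrix.vecTail] <;>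
    ring_nf <;> simp [I2, I3, I4, I5] <;> ring_nf

lemma E_ex : Uf (Real.pi/2) = (((Real.sqrt 2)/2 : ℝ) : ℂ) •
    !![1+Complex.I,0,0,0; 0,1-Complex.I,0,0; 0,0,1-Complex.I,0; 0,0,0,1+Complex.I] := by
  rw [Uf_eq, ZZm_eq, show Real.pi/2/2 = Real.pi/4 by ring,
    Real.cos_pi_div_four, Real.sin_pi_div_four]
  ext i j
  fin_cases i <;> fin_cases j <;>
    simp [Matrix.one_apply, Matrix.vecHead, Matrix.vecTail] <;> ring_nf

/-! ### Specific gates -/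

def RZ (a : ℝ) : Matrix (Fin 2) (Fin 2) ℂ :=
  !![Complex.exp ((a : ℂ) * Complex.I), 0; 0, Complex.exp (-((a : ℂ) * Complex.I))]

def RX (t : ℝ) : Matrix (Fin 2) (Fin 2) ℂ :=
  !![(Real.cos t : ℂ), (Real.sin t : ℂ) * Complex.I;
     (Real.sin t : ℂ) * Complex.I, (Real.cos t : ℂ)]

def P1m : Matrix (Fin 2) (Fin 2) ℂ := !![1-Complex.I,-1-Complex.I;1-Complex.I,1+Complex.I]

def L1m : Matrix (Fin 2) (Fin 2) ℂ := ((1:ℂ)/2) • P1m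

def P2m : Matrix (Fin 2) (Fin 2) ℂ := !![-Complex.I, Complex.I; Complex.I, Complex.I]

def L2m : Matrix (Fin 2) (Fin 2) ℂ := (((Real.sqrt 2)/2 : ℝ) : ℂ) • P2m

def R1pm : Matrix (Fin 2) (Fin 2) ℂ := !![1-Complex.I,-1+Complex.I;1+Complex.I,1+Complex.I]

def R1m : Matrix (Fin 2) (Fin 2) ℂ := ((1:ℂ)/2) • R1pm

def Q2m : Matrix (Fin 2) (Fin 2) ℂ := !![(1:ℂ), 1; -1, 1]

def R2m : Matrix (Fin 2) (Fin 2) ℂ := (((Real.sqrt 2)/2 : ℝ) : ℂ) • Q2m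

lemma sqrt2_mul_self : (((Real.sqrt 2)/2 : ℝ) : ℂ) * (((Real.sqrt 2)/2 : ℝ) : ℂ) = 1/2 := by
  have h : (Real.sqrt 2) * (Real.sqrt 2) = 2 := Real.mul_self_sqrt (by norm_num)
  push_cast
  rw [div_mul_div_comm]
  rw [show ((Real.sqrt 2 : ℂ) * (Real.sqrt 2 : ℂ)) = ((2:ℝ):ℂ) by exact_mod_cast congrArg Complex.ofReal h]
  norm_num

/-! ### SU(2) facts -/

lemma isSU2_one : IsSU2 1 := ⟨one_mem _, Matrix.det_one⟩

lemma IsSU2.mul {a b : Matrix (Fin 2) (Fin 2) ℂ} (ha : IsSU2 a) (hb : IsSU2 b) :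
    IsSU2 (a * b) :=
  ⟨mul_mem ha.1 hb.1, by rw [Matrix.det_mul, ha.2, hb.2, one_mul]⟩

lemma IsSU2.star' {a : Matrix (Fin 2) (Fin 2) ℂ} (ha : IsSU2 a) : IsSU2 (star a) := by
  refine ⟨Unitary.star_mem ha.1, ?_⟩
  rw [Matrix.star_eq_conjTranspose, Matrix.det_conjTranspose, ha.2]
  exact star_one _

lemma IsSU2.mul_star_self {a : Matrix (Fin 2) (Fin 2) ℂ} (ha : IsSU2 a) :
    a * star a = 1 := (Matrix.mem_unitaryGroup_iff).mp ha.1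

lemma IsSU2.star_mul_self {a : Matrix (Fin 2) (Fin 2) ℂ} (ha : IsSU2 a) :
    star a * a = 1 := (Matrix.mem_unitaryGroup_iff').mp ha.1

lemma isSU2_of_entries (k : Matrix (Fin 2) (Fin 2) ℂ)
    (h : star k * k = 1) (hdet : k.det = 1) : IsSU2 k :=
  ⟨Matrix.mem_unitaryGroup_iff'.mpr h, hdet⟩

lemma isSU2_RZ (a : ℝ) : IsSU2 (RZ a) := by
  have hmul : Complex.exp ((a : ℂ) * Complex.I) * Complex.exp (-((a : ℂ) * Complex.I)) = 1 := by
    rw [← Complex.exp_add]; simp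
  constructor
  · rw [Matrix.mem_unitaryGroup_iff']
    ext i j
    fin_cases i <;> fin_cases j <;>
      simp [RZ, Matrix.mul_apply, Fin.sum_univ_two, Matrix.one_apply,
        Matrix.conjTranspose_apply, ← Complex.exp_conj, Complex.conj_ofReal,
        Matrix.vecHead, Matrix.vecTail] <;>
      rw [← Complex.exp_add] <;> simp
  · rw [Matrix.det_fin_two]
    simp [RZ, Matrix.vecHead, Matrix.vecTail]
    rw [← Complex.exp_add]; simp

lemma isSU2_RX (t : ℝ) : IsSU2 (RX t) := by
  have hc : (starRingEnd ℂ) (Complex.cos (t:ℂ)) = Complex.cos (t:ℂ) := by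
    rw [← Complex.ofReal_cos, Complex.conj_ofReal]
  have hs : (starRingEnd ℂ) (Complex.sin (t:ℂ)) = Complex.sin (t:ℂ) := by
    rw [← Complex.ofReal_sin, Complex.conj_ofReal]
  have key2 : Complex.sin (t:ℂ) ^ 2 + Complex.cos (t:ℂ) ^ 2 = 1 := Complex.sin_sq_add_cos_sq _
  constructor
  · rw [Matrix.mem_unitaryGroup_iff']
    ext i j
    fin_cases i <;> fin_cases j <;>
      simp [RX, Matrix.mul_apply, Fin.sum_univ_two, Matrix.one_apply,
        Matrix.conjTranspose_apply, hc, hs, Matrix.vecHead, Matrix.vecTail] <;>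
      ring_nf <;>
      simp [I2, I3, I4, I5, hc, hs] <;>
      first
        | rfl
        | linear_combination key2
        | linear_combination -key2
        | linear_combination Complex.I * key2
        | linear_combination (-Complex.I) * key2
  · rw [Matrix.det_fin_two]
    simp [RX, Matrix.vecHead, Matrix.vecTail]
    all_goals try ring_nf
    all_goals try simp [I2]
    all_goals
      first
        | rfl
        | linear_combination key2
        | linear_combination -key2

lemma star_smul_mat (c : ℂ) (P : Matrix (Fin 2) (Fin 2) ℂ) :
    star (c • P) = (starRingEnd ℂ) c • star P := by
  ext i j
  simp [Matrix.star_apply, Matrix.conjTranspose_apply, Matrix.smul_apply]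

lemma P1m_fact : star P1m * P1m = (4:ℂ) • 1 := by
  ext i j
  fin_cases i <;> fin_cases j <;>
    simp [P1m, Matrix.mul_apply, Fin.sum_univ_two, Matrix.one_apply,
      Matrix.conjTranspose_apply, Matrix.vecHead, Matrix.vecTail,
      _root_.map_sub, _root_.map_add, _root_.map_one, _root_.map_neg, Complex.conj_I] <;>
    ring_nf <;> simp [I2, I3, I4, I5] <;> ring_nf

lemma R1pm_fact : star R1pm * R1pm = (4:ℂ) • 1 := by
  ext i j
  fin_cases i <;> fin_cases j <;>
    simp [R1pm, Matrix.mul_apply, Fin.sum_univ_two, Matrix.one_apply,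
      Matrix.conjTranspose_apply, Matrix.vecHead, Matrix.vecTail,
      _root_.map_sub, _root_.map_add, _root_.map_one, _root_.map_neg, Complex.conj_I] <;>
    ring_nf <;> simp [I2, I3, I4, I5] <;> ring_nf

lemma P2m_fact : star P2m * P2m = (2:ℂ) • 1 := by
  ext i j
  fin_cases i <;> fin_cases j <;>
    simp [P2m, Matrix.mul_apply, Fin.sum_univ_two, Matrix.one_apply,
      Matrix.conjTranspose_apply, Matrix.vecHead, Matrix.vecTail,
      _root_.map_sub, _root_.map_add, _root_.map_one, _root_.map_neg, Complex.conj_I] <;>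
    ring_nf <;> simp [I2, I3, I4, I5] <;> ring_nf

lemma Q2m_fact : star Q2m * Q2m = (2:ℂ) • 1 := by
  ext i j
  fin_cases i <;> fin_cases j <;>
    simp [Q2m, Matrix.mul_apply, Fin.sum_univ_two, Matrix.one_apply,
      Matrix.conjTranspose_apply, Matrix.vecHead, Matrix.vecTail,
      _root_.map_sub, _root_.map_add, _root_.map_one, _root_.map_neg, Complex.conj_I] <;>
    ring_nf <;> simp [I2, I3, I4, I5] <;> ring_nf

lemma P1m_det : P1m.det = 4 := by
  rw [Matrix.det_fin_two]
  simp [P1m, Matrix.vecHead, Matrix.vecTail]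
  all_goals try ring_nf
  all_goals try simp [I2]
  all_goals try ring_nf

lemma R1pm_det : R1pm.det = 4 := by
  rw [Matrix.det_fin_two]
  simp [R1pm, Matrix.vecHead, Matrix.vecTail]
  all_goals try ring_nf
  all_goals try simp [I2]
  all_goals try ring_nf

lemma P2m_det : P2m.det = 2 := by
  rw [Matrix.det_fin_two]
  simp [P2m, Matrix.vecHead, Matrix.vecTail]
  all_goals try ring_nf
  all_goals try simp [I2]
  all_goals try ring_nf

lemma Q2m_det : Q2m.det = 2 := by
  rw [Matrix.det_fin_two]
  simp [Q2m, Matrix.vecHead, Matrix.vecTail]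
  all_goals try ring_nf

lemma isSU2_smul_aux (c : ℂ) (P : Matrix (Fin 2) (Fin 2) ℂ) (r : ℂ)
    (hP : star P * P = r • 1) (hc : (starRingEnd ℂ) c * c * r = 1)
    (hdet : c ^ 2 * P.det = 1) : IsSU2 (c • P) := by
  constructor
  · rw [Matrix.mem_unitaryGroup_iff']
    rw [star_smul_mat, Matrix.smul_mul, Matrix.mul_smul, smul_smul, hP, smul_smul, hc, one_smul]
  · rw [Matrix.det_smul]
    rw [show (Fintype.card (Fin 2)) = 2 from by simp]
    rw [hdet]

lemma conj_half : (starRingEnd ℂ) ((1:ℂ)/2) = (1:ℂ)/2 := by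
  rw [show ((1:ℂ)/2) = (((1/2 : ℝ)) : ℂ) by push_cast; ring, Complex.conj_ofReal]

lemma conj_sqrt2 : (starRingEnd ℂ) ((((Real.sqrt 2)/2 : ℝ)) : ℂ) = (((Real.sqrt 2)/2 : ℝ) : ℂ) :=
  Complex.conj_ofReal _

lemma isSU2_L1m : IsSU2 L1m := by
  refine isSU2_smul_aux _ _ 4 P1m_fact ?_ ?_
  · rw [conj_half]; norm_num
  · rw [P1m_det]; norm_num

lemma isSU2_R1m : IsSU2 R1m := by
  refine isSU2_smul_aux _ _ 4 R1pm_fact ?_ ?_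
  · rw [conj_half]; norm_num
  · rw [R1pm_det]; norm_num

lemma isSU2_L2m : IsSU2 L2m := by
  refine isSU2_smul_aux _ _ 2 P2m_fact ?_ ?_
  · rw [conj_sqrt2]
    rw [sqrt2_mul_self]; norm_num
  · rw [P2m_det, pow_two, sqrt2_mul_self]; norm_num

lemma isSU2_R2m : IsSU2 R2m := by
  refine isSU2_smul_aux _ _ 2 Q2m_fact ?_ ?_
  · rw [conj_sqrt2]
    rw [sqrt2_mul_self]; norm_num
  · rw [Q2m_det, pow_two, sqrt2_mul_self]; norm_num

lemma isSU2_iZ : IsSU2 (Complex.I • σz) := by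
  constructor
  · rw [Matrix.mem_unitaryGroup_iff']
    ext i j
    fin_cases i <;> fin_cases j <;>
      simp [σz, Matrix.mul_apply, Fin.sum_univ_two, Matrix.one_apply,
        Matrix.conjTranspose_apply, Matrix.vecHead, Matrix.vecTail, Complex.ext_iff] <;>
      norm_num
  · rw [Matrix.det_fin_two]
    simp [σz, Matrix.vecHead, Matrix.vecTail, Complex.ext_iff]
    all_goals norm_num

lemma isSU2_iX : IsSU2 (Complex.I • σx) := by
  constructor
  · rw [Matrix.mem_unitaryGroup_iff']
    ext i j
    fin_cases i <;> fin_cases j <;>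
      simp [σx, Matrix.mul_apply, Fin.sum_univ_two, Matrix.one_apply,
        Matrix.conjTranspose_apply, Matrix.vecHead, Matrix.vecTail, Complex.ext_iff] <;>
      norm_num
  · rw [Matrix.det_fin_two]
    simp [σx, Matrix.vecHead, Matrix.vecTail, Complex.ext_iff]
    all_goals norm_num

lemma isSU2_iY : IsSU2 (Complex.I • σy) := by
  constructor
  · rw [Matrix.mem_unitaryGroup_iff']
    ext i j
    fin_cases i <;> fin_cases j <;>
      simp [σy, Matrix.mul_apply, Fin.sum_univ_two, Matrix.one_apply,
        Matrix.conjTranspose_apply, Matrix.vecHead, Matrix.vecTail, Complex.ext_iff] <;>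
      norm_num
  · rw [Matrix.det_fin_two]
    simp [σy, Matrix.vecHead, Matrix.vecTail, Complex.ext_iff]
    all_goals norm_num

/-! ### Local gate and LocallyEquivalent machinery -/

lemma isLocalGate_one : IsLocalGate (1 : Matrix (Fin 4) (Fin 4) ℂ) :=
  ⟨1, 1, isSU2_one, isSU2_one, tensor_one.symm⟩

lemma isLocalGate_tensor {a b : Matrix (Fin 2) (Fin 2) ℂ} (ha : IsSU2 a) (hb : IsSU2 b) :
    IsLocalGate (tensor a b) := ⟨a, b, ha, hb, rfl⟩

lemma IsLocalGate.mul {k l : Matrix (Fin 4) (Fin 4) ℂ}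
    (hk : IsLocalGate k) (hl : IsLocalGate l) : IsLocalGate (k * l) := by
  obtain ⟨a, b, ha, hb, rfl⟩ := hk
  obtain ⟨c, d, hc, hd, rfl⟩ := hl
  exact ⟨a*c, b*d, ha.mul hc, hb.mul hd, tensor_mul a b c d⟩

lemma IsLocalGate.star' {k : Matrix (Fin 4) (Fin 4) ℂ} (hk : IsLocalGate k) :
    IsLocalGate (star k) := by
  obtain ⟨a, b, ha, hb, rfl⟩ := hk
  exact ⟨star a, star b, ha.star', hb.star', (tensor_star a b)⟩

lemma IsLocalGate.mul_star_self {k : Matrix (Fin 4) (Fin 4) ℂ} (hk : IsLocalGate k) :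
    k * star k = 1 := by
  obtain ⟨a, b, ha, hb, rfl⟩ := hk
  rw [tensor_star, tensor_mul, ha.mul_star_self, hb.mul_star_self, tensor_one]

lemma IsLocalGate.star_mul_self {k : Matrix (Fin 4) (Fin 4) ℂ} (hk : IsLocalGate k) :
    star k * k = 1 := by
  obtain ⟨a, b, ha, hb, rfl⟩ := hk
  rw [tensor_star, tensor_mul, ha.star_mul_self, hb.star_mul_self, tensor_one]

lemma locallyEquivalent_refl (V : Matrix (Fin 4) (Fin 4) ℂ) : LocallyEquivalent V V := by
  refine ⟨0, 1, 1, isLocalGate_one, isLocalGate_one, ?_⟩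
  simp

lemma LocallyEquivalent.symm {U V : Matrix (Fin 4) (Fin 4) ℂ}
    (h : LocallyEquivalent U V) : LocallyEquivalent V U := by
  obtain ⟨φ, k, k', hk, hk', hEq⟩ := h
  refine ⟨-φ, star k, star k', hk.star', hk'.star', ?_⟩
  rw [hEq]
  rw [Matrix.mul_smul, Matrix.smul_mul, smul_smul, ← Complex.exp_add]
  rw [show ((-φ : ℝ) : ℂ) * Complex.I + (φ : ℂ) * Complex.I = 0 by push_cast; ring]
  rw [Complex.exp_zero, one_smul]
  rw [show star k * (k * V * k') * star k' = (star k * k) * V * (k' * star k') from by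
    noncomm_ring]
  rw [hk.star_mul_self, hk'.mul_star_self, one_mul, mul_one]

lemma LocallyEquivalent.trans {U V W : Matrix (Fin 4) (Fin 4) ℂ}
    (h1 : LocallyEquivalent U V) (h2 : LocallyEquivalent V W) : LocallyEquivalent U W := by
  obtain ⟨φ, k, k', hk, hk', hEq⟩ := h1
  obtain ⟨ψ, l, l', hl, hl', hEq'⟩ := h2
  refine ⟨φ + ψ, k * l, l' * k', hk.mul hl, hl'.mul hk', ?_⟩
  rw [hEq, hEq']
  rw [Matrix.mul_smul, Matrix.smul_mul, smul_smul, ← Complex.exp_add]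
  rw [show ((φ : ℂ)) * Complex.I + (ψ : ℂ) * Complex.I = ((φ + ψ : ℝ) : ℂ) * Complex.I by
    push_cast; ring]
  congr 1
  noncomm_ring

/-! ### The key identity -/

lemma key_raw (c s c' s' : ℂ) :
    tensor P1m P2m *
      !![c*c'+s*s',0,0,(s*c'-c*s')*Complex.I;
         0, c*c'-s*s', (s*c'+c*s')*Complex.I, 0;
         0, (s*c'+c*s')*Complex.I, c*c'-s*s', 0;
         (s*c'-c*s')*Complex.I,0,0,c*c'+s*s'] *
      tensor R1pm Q2m =
    (4*Complex.I) •
      (!![1+Complex.I,0,0,0;0,1-Complex.I,0,0;0,0,1-Complex.I,0;0,0,0,1+Complex.I] *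
        tensor !![c,s*Complex.I;s*Complex.I,c] !![c',s'*Complex.I;s'*Complex.I,c'] *
        !![1+Complex.I,0,0,0;0,1-Complex.I,0,0;0,0,1-Complex.I,0;0,0,0,1+Complex.I]) := by
  rw [P1m, P2m, R1pm, Q2m, tensor_ex, tensor_ex, tensor_ex]
  ext i j
  fin_cases i <;> fin_cases j <;>
    simp [Matrix.mul_apply, Fin.sum_univ_four, Matrix.vecHead, Matrix.vecTail] <;>
    ring_nf <;> simp [I2, I3, I4, I5] <;> ring_nf

lemma tensor_RX (θ θ' : ℝ) :
    tensor (RX θ) (RX θ') =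
      tensor !![(Real.cos θ : ℂ),(Real.sin θ : ℂ)*Complex.I;(Real.sin θ : ℂ)*Complex.I,(Real.cos θ : ℂ)]
        !![(Real.cos θ' : ℂ),(Real.sin θ' : ℂ)*Complex.I;(Real.sin θ' : ℂ)*Complex.I,(Real.cos θ' : ℂ)] := rfl

lemma key (θ θ' : ℝ) :
    Uf (Real.pi/2) * tensor (RX θ) (RX θ') * Uf (Real.pi/2)
      = Complex.exp (((-(Real.pi/2) : ℝ) : ℂ) * Complex.I) •
          (tensor L1m L2m * A (2*θ) (2*θ') 0 * tensor R1m R2m) := by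
  have hexp : Complex.exp (((-(Real.pi/2) : ℝ) : ℂ) * Complex.I) = -Complex.I := by
    rw [exp_real_mul_I, Real.cos_neg, Real.sin_neg, Real.cos_pi_div_two, Real.sin_pi_div_two]
    push_cast; ring
  have hA : A (2*θ) (2*θ') 0 =
      !![(Real.cos θ : ℂ)*Real.cos θ' + Real.sin θ * Real.sin θ', 0, 0,
           ((Real.sin θ : ℂ)*Real.cos θ' - Real.cos θ * Real.sin θ') * Complex.I;
         0, (Real.cos θ : ℂ)*Real.cos θ' - Real.sin θ * Real.sin θ',
           ((Real.sin θ : ℂ)*Real.cos θ' + Real.cos θ * Real.sin θ') * Complex.I, 0;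
         0, ((Real.sin θ : ℂ)*Real.cos θ' + Real.cos θ * Real.sin θ') * Complex.I,
           (Real.cos θ : ℂ)*Real.cos θ' - Real.sin θ * Real.sin θ', 0;
         ((Real.sin θ : ℂ)*Real.cos θ' - Real.cos θ * Real.sin θ') * Complex.I, 0, 0,
           (Real.cos θ : ℂ)*Real.cos θ' + Real.sin θ * Real.sin θ'] := by
    rw [A0_ex, show 2*θ/2 = θ by ring, show 2*θ'/2 = θ' by ring]
  rw [E_ex, hA, hexp]
  simp only [RX, L2m, R2m, L1m, R1m]
  rw [tensor_smul_right, tensor_smul_right, tensor_smul_left, tensor_smul_left]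
  have hraw := key_raw (Real.cos θ : ℂ) (Real.sin θ : ℂ) (Real.cos θ' : ℂ) (Real.sin θ' : ℂ)
  simp only [smul_mul_assoc, mul_smul_comm, smul_smul]
  rw [hraw, smul_smul]
  congr 1
  push_cast
  linear_combination ((Real.sqrt 2 : ℂ)/2 * ((Real.sqrt 2 : ℂ)/2)) * I2

/-! ### E commutes with RZ ⊗ RZ -/

lemma E_comm_RZ (a b : ℝ) :
    Uf (Real.pi/2) * tensor (RZ a) (RZ b) = tensor (RZ a) (RZ b) * Uf (Real.pi/2) := by
  rw [E_ex, Matrix.smul_mul, Matrix.mul_smul]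
  congr 1
  rw [RZ, RZ, tensor_ex]
  ext i j
  fin_cases i <;> fin_cases j <;>
    simp [Matrix.mul_apply, Fin.sum_univ_four, Matrix.vecHead, Matrix.vecTail] <;> ring

/-! ### Symmetry identities for A -/

lemma exp_q (x y : ℝ) (hxy : x + y = Real.pi/2) :
    Complex.exp ((x : ℂ) * Complex.I) * Complex.exp ((y : ℂ) * Complex.I) = Complex.I := by
  rw [exp_exp, hxy, Real.cos_pi_div_two, Real.sin_pi_div_two]
  push_cast; ring

lemma exp_q' (x y : ℝ) (hxy : x + y = -(Real.pi/2)) :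
    Complex.exp ((x : ℂ) * Complex.I) * Complex.exp ((y : ℂ) * Complex.I) = -Complex.I := by
  rw [exp_exp, hxy, Real.cos_neg, Real.sin_neg, Real.cos_pi_div_two, Real.sin_pi_div_two]
  push_cast; ring

lemma e_mm : Complex.exp (-((Real.pi : ℂ)/4 * Complex.I)) *
    Complex.exp (-((Real.pi : ℂ)/4 * Complex.I)) = -Complex.I := by
  rw [show (-((Real.pi : ℂ)/4 * Complex.I)) = ((-(Real.pi/4) : ℝ) : ℂ) * Complex.I by
    push_cast; ring]
  exact exp_q' _ _ (by ring)

lemma e_mp : Complex.exp (-((Real.pi : ℂ)/4 * Complex.I)) *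
    Complex.exp ((Real.pi : ℂ)/4 * Complex.I) = 1 := by
  rw [← Complex.exp_add]
  rw [show (-((Real.pi : ℂ)/4 * Complex.I)) + (Real.pi : ℂ)/4 * Complex.I = 0 by ring]
  exact Complex.exp_zero

lemma e_pm : Complex.exp ((Real.pi : ℂ)/4 * Complex.I) *
    Complex.exp (-((Real.pi : ℂ)/4 * Complex.I)) = 1 := by
  rw [← Complex.exp_add]
  rw [show (Real.pi : ℂ)/4 * Complex.I + (-((Real.pi : ℂ)/4 * Complex.I)) = 0 by ring]
  exact Complex.exp_zero

lemma e_pp : Complex.exp ((Real.pi : ℂ)/4 * Complex.I) *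
    Complex.exp ((Real.pi : ℂ)/4 * Complex.I) = Complex.I := by
  rw [show ((Real.pi : ℂ)/4 * Complex.I) = ((Real.pi/4 : ℝ) : ℂ) * Complex.I by
    push_cast; ring]
  exact exp_q _ _ (by ring)

lemma tensor_RZ_pi4 :
    tensor (RZ (-(Real.pi/4))) (RZ (-(Real.pi/4))) =
      !![-Complex.I,0,0,0; 0,1,0,0; 0,0,1,0; 0,0,0,Complex.I] := by
  rw [RZ, tensor_ex]
  ext i j
  fin_cases i <;> fin_cases j <;>
    simp [Matrix.vecHead, Matrix.vecTail, e_mm, e_mp, e_pm, e_pp]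

lemma tensor_RZ_pi4' :
    tensor (RZ (Real.pi/4)) (RZ (Real.pi/4)) =
      !![Complex.I,0,0,0; 0,1,0,0; 0,0,1,0; 0,0,0,-Complex.I] := by
  rw [RZ, tensor_ex]
  ext i j
  fin_cases i <;> fin_cases j <;>
    simp [Matrix.vecHead, Matrix.vecTail, e_mm, e_mp, e_pm, e_pp]

lemma leA_swap (c1 c2 : ℝ) : LocallyEquivalent (A c1 c2 0) (A c2 c1 0) := by
  refine ⟨0, tensor (RZ (-(Real.pi/4))) (RZ (-(Real.pi/4))),
    tensor (RZ (Real.pi/4)) (RZ (Real.pi/4)),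
    isLocalGate_tensor (isSU2_RZ _) (isSU2_RZ _),
    isLocalGate_tensor (isSU2_RZ _) (isSU2_RZ _), ?_⟩
  rw [show ((0:ℝ):ℂ) * Complex.I = 0 by simp, Complex.exp_zero, one_smul]
  rw [tensor_RZ_pi4, tensor_RZ_pi4', A0_ex, A0_ex]
  ext i j
  fin_cases i <;> fin_cases j <;>
    simp [Matrix.mul_apply, Fin.sum_univ_four, Matrix.vecHead, Matrix.vecTail] <;>
    ring_nf <;> simp [I2, I3, I4, I5] <;> ring_nf

lemma tensor_iZ_one :
    tensor (Complex.I • σz) 1 = !![Complex.I,0,0,0; 0,Complex.I,0,0;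
      0,0,-Complex.I,0; 0,0,0,-Complex.I] := by
  rw [show (1 : Matrix (Fin 2) (Fin 2) ℂ) = !![1,0;0,1] by
    ext i j; fin_cases i <;> fin_cases j <;> simp [Matrix.one_apply]]
  rw [show Complex.I • σz = !![Complex.I,0;0,-Complex.I] by
    rw [σz]; ext i j; fin_cases i <;> fin_cases j <;> simp]
  rw [tensor_ex]
  ext i j
  fin_cases i <;> fin_cases j <;> simp [Matrix.vecHead, Matrix.vecTail]

lemma leA_flip (c1 c2 : ℝ) : LocallyEquivalent (A (-c1) (-c2) 0) (A c1 c2 0) := by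
  refine ⟨Real.pi, tensor (Complex.I • σz) 1, tensor (Complex.I • σz) 1,
    isLocalGate_tensor isSU2_iZ isSU2_one, isLocalGate_tensor isSU2_iZ isSU2_one, ?_⟩
  rw [show Complex.exp ((Real.pi : ℂ) * Complex.I) = -1 by
    rw [show (Real.pi : ℂ) * Complex.I = ((Real.pi : ℝ) : ℂ) * Complex.I by norm_num,
      exp_real_mul_I]; norm_num]
  rw [tensor_iZ_one, A0_ex, A0_ex]
  rw [show -c1/2 = -(c1/2) by ring, show -c2/2 = -(c2/2) by ring,
    Real.cos_neg, Real.cos_neg, Real.sin_neg, Real.sin_neg]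
  ext i j
  fin_cases i <;> fin_cases j <;>
    simp [Matrix.mul_apply, Fin.sum_univ_four, Matrix.vecHead, Matrix.vecTail] <;>
    ring_nf <;> simp [I2, I3, I4, I5] <;> ring_nf

lemma tensor_iX_iX :
    tensor (Complex.I • σx) (Complex.I • σx) =
      !![0,0,0,-1; 0,0,-1,0; 0,-1,0,0; -1,0,0,0] := by
  rw [show Complex.I • σx = !![0,Complex.I;Complex.I,0] by
    rw [σx]; ext i j; fin_cases i <;> fin_cases j <;> simp]
  rw [tensor_ex]
  ext i j
  fin_cases i <;> fin_cases j <;> simp [Matrix.vecHead, Matrix.vecTail, Complex.I_mul_I]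

lemma tensor_iY_iY :
    tensor (Complex.I • σy) (Complex.I • σy) =
      !![0,0,0,1; 0,0,-1,0; 0,-1,0,0; 1,0,0,0] := by
  rw [show Complex.I • σy = !![0,1;-1,0] by
    rw [σy]; ext i j; fin_cases i <;> fin_cases j <;> simp [Complex.I_mul_I] <;>
      simp [Complex.ext_iff]]
  rw [tensor_ex]
  ext i j
  fin_cases i <;> fin_cases j <;> simp [Matrix.vecHead, Matrix.vecTail]

lemma exp_neg_pi_div_two : Complex.exp (((-(Real.pi/2) : ℝ) : ℂ) * Complex.I) = -Complex.I := by
  rw [exp_real_mul_I]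
  norm_num [Real.cos_pi_div_two, Real.sin_pi_div_two]

lemma leA_shift1 (c1 c2 : ℝ) : LocallyEquivalent (A (c1 + Real.pi) c2 0) (A c1 c2 0) := by
  refine ⟨-(Real.pi/2), tensor (Complex.I • σx) (Complex.I • σx), 1,
    isLocalGate_tensor isSU2_iX isSU2_iX, isLocalGate_one, ?_⟩
  rw [exp_neg_pi_div_two, tensor_iX_iX, mul_one, A0_ex, A0_ex]
  rw [show (c1 + Real.pi)/2 = c1/2 + Real.pi/2 by ring,
    Real.cos_add_pi_div_two, Real.sin_add_pi_div_two]
  ext i j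
  fin_cases i <;> fin_cases j <;>
    simp [Matrix.mul_apply, Fin.sum_univ_four, Matrix.vecHead, Matrix.vecTail] <;>
    ring_nf <;> simp [I2, I3, I4, I5] <;> ring_nf

lemma leA_shift2 (c1 c2 : ℝ) : LocallyEquivalent (A c1 (c2 + Real.pi) 0) (A c1 c2 0) := by
  refine ⟨-(Real.pi/2), tensor (Complex.I • σy) (Complex.I • σy), 1,
    isLocalGate_tensor isSU2_iY isSU2_iY, isLocalGate_one, ?_⟩
  rw [exp_neg_pi_div_two, tensor_iY_iY, mul_one, A0_ex, A0_ex]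
  rw [show (c2 + Real.pi)/2 = c2/2 + Real.pi/2 by ring,
    Real.cos_add_pi_div_two, Real.sin_add_pi_div_two]
  ext i j
  fin_cases i <;> fin_cases j <;>
    simp [Matrix.mul_apply, Fin.sum_univ_four, Matrix.vecHead, Matrix.vecTail] <;>
    ring_nf <;> simp [I2, I3, I4, I5] <;> ring_nf

/-! ### Weyl chamber reduction -/

lemma reduce (x y : ℝ) (hx0 : 0 ≤ x) (hx : x ≤ Real.pi) (hy0 : 0 ≤ y) (hy : y ≤ Real.pi) :
    ∃ c1 c2 : ℝ, c2 ≤ c1 ∧ 0 ≤ c2 ∧ c1 + c2 ≤ Real.pi ∧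
      LocallyEquivalent (A x y 0) (A c1 c2 0) := by
  have main : ∀ u v : ℝ, 0 ≤ u → 0 ≤ v → u + v ≤ Real.pi →
      ∀ B : Matrix (Fin 4) (Fin 4) ℂ, LocallyEquivalent B (A u v 0) →
      ∃ c1 c2 : ℝ, c2 ≤ c1 ∧ 0 ≤ c2 ∧ c1 + c2 ≤ Real.pi ∧ LocallyEquivalent B (A c1 c2 0) := by
    intro u v hu hv huv B hB
    by_cases hvu : v ≤ u
    · exact ⟨u, v, hvu, hv, huv, hB⟩
    · exact ⟨v, u, le_of_not_ge hvu, hu, by linarith, hB.trans (leA_swap u v)⟩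
  by_cases hs : x + y ≤ Real.pi
  · exact main x y hx0 hy0 hs _ (locallyEquivalent_refl _)
  · -- use (π - x, π - y)
    have h1 : LocallyEquivalent (A (Real.pi - x) (Real.pi - y) 0) (A x y 0) := by
      have e1 : LocallyEquivalent (A (-x + Real.pi) (-y + Real.pi) 0) (A (-x) (-y + Real.pi) 0) :=
        leA_shift1 (-x) (-y + Real.pi)
      have e2 : LocallyEquivalent (A (-x) (-y + Real.pi) 0) (A (-x) (-y) 0) :=
        leA_shift2 (-x) (-y)
      have e3 : LocallyEquivalent (A (-x) (-y) 0) (A x y 0) := leA_flip x y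
      rw [show Real.pi - x = -x + Real.pi by ring, show Real.pi - y = -y + Real.pi by ring]
      exact e1.trans (e2.trans e3)
    have h1' : LocallyEquivalent (A x y 0) (A (Real.pi - x) (Real.pi - y) 0) := h1.symm
    exact main (Real.pi - x) (Real.pi - y) (by linarith) (by linarith) (by linarith) _ h1'

/-! ### Euler decomposition of SU(2) -/

lemma exp_mul_exp (x y : ℝ) :
    Complex.exp ((x:ℂ) * Complex.I) * Complex.exp ((y:ℂ) * Complex.I)
      = Complex.exp (((x+y : ℝ):ℂ) * Complex.I) := by
  rw [← Complex.exp_add]; congr 1; push_cast; ring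

lemma exp_neg_arg (x : ℝ) :
    Complex.exp (-((x:ℂ) * Complex.I)) = Complex.exp ((((-x) : ℝ):ℂ) * Complex.I) := by
  congr 1; push_cast; ring

lemma exp_pi_div_two_I : Complex.exp (((Real.pi/2 : ℝ):ℂ) * Complex.I) = Complex.I := by
  rw [exp_real_mul_I, Real.cos_pi_div_two, Real.sin_pi_div_two]; push_cast; ring

lemma RZRXRZ (a t b : ℝ) : RZ a * RX t * RZ b =
    !![(Real.cos t : ℂ) * (Complex.exp ((a:ℂ)*Complex.I) * Complex.exp ((b:ℂ)*Complex.I)),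
       (Real.sin t : ℂ) * Complex.I * (Complex.exp ((a:ℂ)*Complex.I) * Complex.exp (-((b:ℂ)*Complex.I)));
       (Real.sin t : ℂ) * Complex.I * (Complex.exp (-((a:ℂ)*Complex.I)) * Complex.exp ((b:ℂ)*Complex.I)),
       (Real.cos t : ℂ) * (Complex.exp (-((a:ℂ)*Complex.I)) * Complex.exp (-((b:ℂ)*Complex.I)))] := by
  ext i j
  fin_cases i <;> fin_cases j <;>
    simp [RZ, RX, Matrix.mul_apply, Fin.sum_univ_two, Matrix.vecHead, Matrix.vecTail] <;> ring

lemma conj_u_form (u : ℂ) : (starRingEnd ℂ) u =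
    ((‖u‖ : ℝ) : ℂ) * Complex.exp (((-(Complex.arg u) : ℝ):ℂ) * Complex.I) := by
  have habs := congrArg (starRingEnd ℂ) (Complex.norm_mul_exp_arg_mul_I u)
  rw [_root_.map_mul, Complex.conj_ofReal, ← Complex.exp_conj] at habs
  rw [show (starRingEnd ℂ) (((Complex.arg u : ℝ)) * Complex.I)
      = ((-(Complex.arg u) : ℝ):ℂ) * Complex.I by
    rw [_root_.map_mul, Complex.conj_ofReal, Complex.conj_I]; push_cast; ring] at habs
  exact habs.symm

lemma euler {k : Matrix (Fin 2) (Fin 2) ℂ} (h : IsSU2 k) :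
    ∃ a t b : ℝ, 0 ≤ t ∧ t ≤ Real.pi/2 ∧ k = RZ a * RX t * RZ b := by
  have h1 : star k * k = 1 := Matrix.mem_unitaryGroup_iff'.mp h.1
  have h2 : k * star k = 1 := Matrix.mem_unitaryGroup_iff.mp h.1
  have hstar_adj : star k = k.adjugate := by
    have hi : k⁻¹ = star k := Matrix.inv_eq_left_inv h1
    rw [← hi, Matrix.inv_def, h.2, Ring.inverse_one, one_smul]
  have hadj2 := Matrix.adjugate_fin_two k
  obtain ⟨u, hu⟩ : ∃ u, k 0 0 = u := ⟨_, rfl⟩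
  obtain ⟨v, hv⟩ : ∃ v, k 0 1 = v := ⟨_, rfl⟩
  have hk11 : k 1 1 = (starRingEnd ℂ) u := by
    have e := congrFun (congrFun hstar_adj 0) 0
    rw [hadj2] at e
    simp [Matrix.star_apply, Matrix.conjTranspose_apply, hu] at e
    first
      | exact e.symm
      | exact e
      | linear_combination e
      | linear_combination -e
  have hk10 : k 1 0 = -((starRingEnd ℂ) v) := by
    have e := congrFun (congrFun hstar_adj 1) 0
    rw [hadj2] at e
    simp [Matrix.star_apply, Matrix.conjTranspose_apply, hv] at e
    first
      | exact e.symm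
      | exact e
      | linear_combination e
      | linear_combination -e
  have hnorm : Complex.normSq u + Complex.normSq v = 1 := by
    have h00 := congrFun (congrFun h2 0) 0
    simp [Matrix.mul_apply, Fin.sum_univ_two, Matrix.star_apply,
      Matrix.conjTranspose_apply, Matrix.one_apply, hu, hv] at h00
    have hC : ((Complex.normSq u + Complex.normSq v : ℝ) : ℂ) = 1 := by
      push_cast
      rw [← Complex.mul_conj, ← Complex.mul_conj]
      first
        | linear_combination h00
        | linear_combination -h00
    exact_mod_cast hC
  have hv1 : ‖v‖ ≤ 1 := by
    nlinarith [Complex.sq_norm v, Complex.sq_norm u, norm_nonneg v, norm_nonneg u,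
      Complex.normSq_nonneg u, Complex.normSq_nonneg v]
  refine ⟨(Complex.arg u + Complex.arg v - Real.pi/2)/2, Real.arcsin (‖v‖),
    (Complex.arg u - Complex.arg v + Real.pi/2)/2,
    Real.arcsin_nonneg.mpr (norm_nonneg v),
    Real.arcsin_le_pi_div_two _, ?_⟩
  have hsin : Real.sin (Real.arcsin (‖v‖)) = ‖v‖ :=
    Real.sin_arcsin (by linarith [norm_nonneg v]) hv1
  have hcos : Real.cos (Real.arcsin (‖v‖)) = ‖u‖ := by
    rw [Real.cos_arcsin]
    rw [show 1 - (‖v‖)^2 = (‖u‖)^2 by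
      rw [Complex.sq_norm, Complex.sq_norm]; linarith]
    exact Real.sqrt_sq (norm_nonneg u)
  rw [RZRXRZ]
  have E1 : (Real.cos (Real.arcsin (‖v‖)) : ℂ) *
      (Complex.exp ((((Complex.arg u + Complex.arg v - Real.pi/2)/2 : ℝ):ℂ)*Complex.I) *
        Complex.exp ((((Complex.arg u - Complex.arg v + Real.pi/2)/2 : ℝ):ℂ)*Complex.I)) = u := by
    rw [exp_mul_exp,
      show ((Complex.arg u + Complex.arg v - Real.pi/2)/2 + (Complex.arg u - Complex.arg v + Real.pi/2)/2 : ℝ)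
        = Complex.arg u by ring, hcos]
    exact Complex.norm_mul_exp_arg_mul_I u
  have E2 : (Real.sin (Real.arcsin (‖v‖)) : ℂ) * Complex.I *
      (Complex.exp ((((Complex.arg u + Complex.arg v - Real.pi/2)/2 : ℝ):ℂ)*Complex.I) *
        Complex.exp (-((((Complex.arg u - Complex.arg v + Real.pi/2)/2 : ℝ):ℂ)*Complex.I))) = v := by
    rw [exp_neg_arg, exp_mul_exp,
      show ((Complex.arg u + Complex.arg v - Real.pi/2)/2 + -((Complex.arg u - Complex.arg v + Real.pi/2)/2) : ℝ)
        = Complex.arg v - Real.pi/2 by ring, hsin]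
    rw [show ((Complex.arg v - Real.pi/2 : ℝ) : ℂ) * Complex.I
        = ((Complex.arg v : ℝ) : ℂ) * Complex.I + ((-(Real.pi/2) : ℝ):ℂ) * Complex.I by
      push_cast; ring]
    rw [Complex.exp_add, exp_neg_pi_div_two]
    have habs := Complex.norm_mul_exp_arg_mul_I v
    linear_combination habs - (((‖v‖ : ℝ):ℂ) *
      Complex.exp (((Complex.arg v : ℝ):ℂ) * Complex.I)) * I2
  have E3 : (Real.sin (Real.arcsin (‖v‖)) : ℂ) * Complex.I *
      (Complex.exp (-((((Complex.arg u + Complex.arg v - Real.pi/2)/2 : ℝ):ℂ)*Complex.I)) *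
        Complex.exp ((((Complex.arg u - Complex.arg v + Real.pi/2)/2 : ℝ):ℂ)*Complex.I)) =
      -((starRingEnd ℂ) v) := by
    rw [exp_neg_arg, exp_mul_exp,
      show (-((Complex.arg u + Complex.arg v - Real.pi/2)/2) + (Complex.arg u - Complex.arg v + Real.pi/2)/2 : ℝ)
        = -(Complex.arg v) + Real.pi/2 by ring, hsin]
    rw [show ((-(Complex.arg v) + Real.pi/2 : ℝ) : ℂ) * Complex.I
        = ((-(Complex.arg v) : ℝ) : ℂ) * Complex.I + ((Real.pi/2 : ℝ):ℂ) * Complex.I by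
      push_cast; ring]
    rw [Complex.exp_add, exp_pi_div_two_I, conj_u_form v]
    linear_combination (((‖v‖ : ℝ):ℂ) *
      Complex.exp (((-(Complex.arg v) : ℝ):ℂ) * Complex.I)) * I2
  have E4 : (Real.cos (Real.arcsin (‖v‖)) : ℂ) *
      (Complex.exp (-((((Complex.arg u + Complex.arg v - Real.pi/2)/2 : ℝ):ℂ)*Complex.I)) *
        Complex.exp (-((((Complex.arg u - Complex.arg v + Real.pi/2)/2 : ℝ):ℂ)*Complex.I))) =
      (starRingEnd ℂ) u := by
    rw [exp_neg_arg, exp_neg_arg, exp_mul_exp,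
      show (-((Complex.arg u + Complex.arg v - Real.pi/2)/2) + -((Complex.arg u - Complex.arg v + Real.pi/2)/2) : ℝ)
        = -(Complex.arg u) by ring, hcos, conj_u_form u]
  ext i j
  fin_cases i <;> fin_cases j
  · exact hu.trans E1.symm
  · exact hv.trans E2.symm
  · exact hk10.trans E3.symm
  · exact hk11.trans E4.symm

end Aux

/-- A `4×4` unitary `U` is generated by two applications of `Uf (π/2)` (the CNOT
gate up to local equivalence) with local gates if and only if `U` is locally
equivalent to some `A(c1, c2, 0)` with `c1 ≥ c2 ≥ 0` and `c1 + c2 ≤ π`. -/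
theorem stmt10 (U : Matrix (Fin 4) (Fin 4) ℂ) (hU : U ∈ Matrix.unitaryGroup (Fin 4) ℂ) :
    GeneratedBy (Uf (Real.pi / 2)) 2 U ↔
      ∃ c1 c2 : ℝ, c2 ≤ c1 ∧ 0 ≤ c2 ∧ c1 + c2 ≤ Real.pi ∧
        LocallyEquivalent U (A c1 c2 0) := by
  constructor
  · rintro ⟨φ, k, hk, hUeq⟩
    obtain ⟨a, b, ha, hb, hk1⟩ := hk 1 (by norm_num)
    obtain ⟨a1, t, b1, ht0, ht1, hEa⟩ := euler ha
    obtain ⟨a2, t', b2, ht0', ht1', hEb⟩ := euler hb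
    have hcir : circuit (Uf (Real.pi/2)) k 2
        = k 2 * Uf (Real.pi/2) * (k 1 * Uf (Real.pi/2) * k 0) := by
      show k 2 * Uf (Real.pi/2) * (k 1 * Uf (Real.pi/2) * k 0)
        = k 2 * Uf (Real.pi/2) * (k 1 * Uf (Real.pi/2) * k 0)
      rfl
    -- rewrite the middle
    have hmid : Uf (Real.pi/2) * k 1 * Uf (Real.pi/2)
        = Complex.exp (((-(Real.pi/2) : ℝ) : ℂ) * Complex.I) •
            ((tensor (RZ a1) (RZ a2) * tensor L1m L2m) * A (2*t) (2*t') 0 *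
              (tensor R1m R2m * tensor (RZ b1) (RZ b2))) := by
      rw [hk1, hEa, hEb]
      rw [show tensor (RZ a1 * RX t * RZ b1) (RZ a2 * RX t' * RZ b2)
          = tensor (RZ a1) (RZ a2) * tensor (RX t) (RX t') * tensor (RZ b1) (RZ b2) by
        rw [tensor_mul, tensor_mul]]
      calc Uf (Real.pi/2) * (tensor (RZ a1) (RZ a2) * tensor (RX t) (RX t') * tensor (RZ b1) (RZ b2)) * Uf (Real.pi/2)
          = tensor (RZ a1) (RZ a2) * (Uf (Real.pi/2) * tensor (RX t) (RX t') * Uf (Real.pi/2)) * tensor (RZ b1) (RZ b2) := by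
            rw [show Uf (Real.pi/2) * (tensor (RZ a1) (RZ a2) * tensor (RX t) (RX t') * tensor (RZ b1) (RZ b2))
                = Uf (Real.pi/2) * tensor (RZ a1) (RZ a2) * tensor (RX t) (RX t') * tensor (RZ b1) (RZ b2) by
              noncomm_ring]
            rw [E_comm_RZ]
            rw [show tensor (RZ a1) (RZ a2) * Uf (Real.pi/2) * tensor (RX t) (RX t') * tensor (RZ b1) (RZ b2) * Uf (Real.pi/2)
                = tensor (RZ a1) (RZ a2) * Uf (Real.pi/2) * tensor (RX t) (RX t') * (tensor (RZ b1) (RZ b2) * Uf (Real.pi/2)) by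
              noncomm_ring]
            rw [← E_comm_RZ b1 b2]
            noncomm_ring
        _ = tensor (RZ a1) (RZ a2) * (Complex.exp (((-(Real.pi/2) : ℝ) : ℂ) * Complex.I) •
              (tensor L1m L2m * A (2*t) (2*t') 0 * tensor R1m R2m)) * tensor (RZ b1) (RZ b2) := by
            rw [key t t']
        _ = Complex.exp (((-(Real.pi/2) : ℝ) : ℂ) * Complex.I) •
              ((tensor (RZ a1) (RZ a2) * tensor L1m L2m) * A (2*t) (2*t') 0 *
                (tensor R1m R2m * tensor (RZ b1) (RZ b2))) := by
            rw [Matrix.mul_smul, Matrix.smul_mul]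
            congr 1
            noncomm_ring
    have hle : LocallyEquivalent U (A (2*t) (2*t') 0) := by
      refine ⟨φ + (-(Real.pi/2)),
        k 2 * (tensor (RZ a1) (RZ a2) * tensor L1m L2m),
        (tensor R1m R2m * tensor (RZ b1) (RZ b2)) * k 0,
        (hk 2 (by norm_num)).mul
          ((isLocalGate_tensor (isSU2_RZ a1) (isSU2_RZ a2)).mul
            (isLocalGate_tensor isSU2_L1m isSU2_L2m)),
        ((isLocalGate_tensor isSU2_R1m isSU2_R2m).mul
          (isLocalGate_tensor (isSU2_RZ b1) (isSU2_RZ b2))).mul (hk 0 (by norm_num)), ?_⟩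
      rw [hUeq, hcir]
      rw [show k 2 * Uf (Real.pi/2) * (k 1 * Uf (Real.pi/2) * k 0)
          = k 2 * (Uf (Real.pi/2) * k 1 * Uf (Real.pi/2)) * k 0 by noncomm_ring]
      rw [hmid]
      rw [Matrix.mul_smul, Matrix.smul_mul, smul_smul, ← Complex.exp_add]
      rw [show ((φ : ℂ)) * Complex.I + ((-(Real.pi/2) : ℝ) : ℂ) * Complex.I
          = (((φ + (-(Real.pi/2)) : ℝ) : ℂ)) * Complex.I by push_cast; ring]
      congr 1
      noncomm_ring
    obtain ⟨c1, c2, hc21, hc20, hcsum, hred⟩ :=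
      reduce (2*t) (2*t') (by linarith) (by linarith) (by linarith) (by linarith)
    exact ⟨c1, c2, hc21, hc20, hcsum, hle.trans hred⟩
  · rintro ⟨c1, c2, _, _, _, φ, k, k', hk, hk', hUeq⟩
    have hkey := key (c1/2) (c2/2)
    rw [show 2*(c1/2) = c1 by ring, show 2*(c2/2) = c2 by ring] at hkey
    set tL := tensor L1m L2m with htL
    set tR := tensor R1m R2m with htR
    have htLl : IsLocalGate tL := isLocalGate_tensor isSU2_L1m isSU2_L2m
    have htRl : IsLocalGate tR := isLocalGate_tensor isSU2_R1m isSU2_R2m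
    have hA : A c1 c2 0 = Complex.exp (((Real.pi/2 : ℝ) : ℂ) * Complex.I) •
        (star tL * (Uf (Real.pi/2) * tensor (RX (c1/2)) (RX (c2/2)) * Uf (Real.pi/2)) * star tR) := by
      rw [hkey]
      rw [Matrix.mul_smul, Matrix.smul_mul, smul_smul, ← Complex.exp_add]
      rw [show (((Real.pi/2 : ℝ) : ℂ)) * Complex.I + ((-(Real.pi/2) : ℝ) : ℂ) * Complex.I = 0 by
        push_cast; ring]
      rw [Complex.exp_zero, one_smul]
      rw [show star tL * (tL * A c1 c2 0 * tR) * star tR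
          = (star tL * tL) * A c1 c2 0 * (tR * star tR) from by noncomm_ring]
      rw [htLl.star_mul_self, htRl.mul_star_self, one_mul, mul_one]
    refine ⟨φ + Real.pi/2,
      fun n => if n = 0 then star tR * k' else
        if n = 1 then tensor (RX (c1/2)) (RX (c2/2)) else k * star tL, ?_, ?_⟩
    · intro i hi
      interval_cases i
      · exact htRl.star'.mul hk'
      · exact isLocalGate_tensor (isSU2_RX _) (isSU2_RX _)
      · exact hk.mul htLl.star'
    · show U = _ • circuit _ _ 2
      have hcir : circuit (Uf (Real.pi/2))
          (fun n => if n = 0 then star tR * k' else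
            if n = 1 then tensor (RX (c1/2)) (RX (c2/2)) else k * star tL) 2
          = (k * star tL) * Uf (Real.pi/2) *
              (tensor (RX (c1/2)) (RX (c2/2)) * Uf (Real.pi/2) * (star tR * k')) := by
        rfl
      rw [hcir, hUeq, hA]
      rw [Matrix.mul_smul, Matrix.smul_mul, smul_smul, ← Complex.exp_add]
      rw [show ((φ : ℂ)) * Complex.I + (((Real.pi/2 : ℝ) : ℂ)) * Complex.I
          = (((φ + Real.pi/2 : ℝ) : ℂ)) * Complex.I by push_cast; ring]
      congr 1
      noncomm_ring
end
end

section
/- Let γ ∈ (0, π/2] and let n be a positive integer. The following are equivalent: (i) for every (c1, c2, c3) ∈ ℝ³ with π − c2 ≥ c1 ≥ c2 ≥ c3 ≥ 0, either c1 + c2 + c3 ≤ n·γ or c1 − c2 − c3 ≥ π − n·γ; (ii) n·γ ≥ 3π/2. (Geometrically: the union of the two tetrahedra with face equations c1+c2+c3 = nγ and c1−c2−c3 = π−nγ covers the tetrahedron of canonical classes exactly when n·γ ≥ 3π/2, the critical point being the SWAP class (π/2, π/2, π/2).) -/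
/-- The union of the two tetrahedra with faces `c1+c2+c3 = nγ` and
`c1-c2-c3 = π-nγ` covers the tetrahedron of canonical classes
`π - c2 ≥ c1 ≥ c2 ≥ c3 ≥ 0` if and only if `n·γ ≥ 3π/2`. -/
theorem stmt15 (γ : ℝ) (hγ : γ ∈ Set.Ioc 0 (Real.pi / 2)) (n : ℕ) (hn : 1 ≤ n) :
    (∀ c1 c2 c3 : ℝ, c1 ≤ Real.pi - c2 → c2 ≤ c1 → c3 ≤ c2 → 0 ≤ c3 →
      c1 + c2 + c3 ≤ (n : ℝ) * γ ∨ Real.pi - (n : ℝ) * γ ≤ c1 - c2 - c3) ↔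
    3 * Real.pi / 2 ≤ (n : ℝ) * γ := by
  have hpi := Real.pi_pos
  constructor
  · intro h
    have := h (Real.pi / 2) (Real.pi / 2) (Real.pi / 2) (by linarith) le_rfl le_rfl (by linarith)
    rcases this with h1 | h1 <;> linarith
  · intro h c1 c2 c3 h1 h2 h3 h4
    right; linarith
end

section
/- For all real c1, c2, c3, the canonical gate A(c1, c2, c3) satisfies tr(m(A(c1,c2,c3))) = 4·(cos c1·cos c2·cos c3 + i·sin c1·sin c2·sin c3) and (tr(m(A(c1,c2,c3)))² − tr(m(A(c1,c2,c3))²))/4 = 2·(cos²c1 + cos²c2 + cos²c3) − 3. -/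
open Matrix Kronecker

noncomputable section

/-- The magic-basis matrix `Q`. -/
def Q : Matrix (Fin 4) (Fin 4) ℂ :=
  ((Real.sqrt 2 : ℂ))⁻¹ •
    !![1, 0, 0, Complex.I; 0, Complex.I, 1, 0; 0, Complex.I, -1, 0; 1, 0, 0, -Complex.I]

/-- `m U = (Q† U Q)ᵀ (Q† U Q)`, whose trace gives Makhlin-type local invariants. -/
def mInv (U : Matrix (Fin 4) (Fin 4) ℂ) : Matrix (Fin 4) (Fin 4) ℂ :=
  (Q.conjTranspose * U * Q)ᵀ * (Q.conjTranspose * U * Q)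

/-!
The magic basis simultaneously diagonalises `σx⊗σx`, `σy⊗σy` and `σz⊗σz`, with eigenvalue
vectors `(1,1,-1,-1)`, `(-1,1,-1,1)` and `(1,-1,-1,1)`. Hence `Q† A Q` is diagonal with entries
`exp(i λⱼ/2)`, where `λⱼ = ±c1 ± c2 ± c3` runs over the four sign patterns with product `-1`, and
`m(A)` is diagonal with entries `exp(i λⱼ)`. Both invariants are then symmetric functions of the
`exp(i λⱼ)`; writing `cos` and `sin` through `exp(± i cₖ)` turns each claimed identity into a
Laurent-polynomial identity in `exp(i c1), exp(i c2), exp(i c3)`.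
-/

open Complex

def toMagicBasis (M : Matrix (Fin 4) (Fin 4) ℂ) : Matrix (Fin 4) (Fin 4) ℂ := Qᴴ * M * Q

lemma ofReal_sqrt_two_sq : (Real.sqrt 2 : ℂ) ^ 2 = 2 := by
  rw [← ofReal_pow, Real.sq_sqrt zero_le_two]
  norm_num

lemma Q_mul_conjTranspose_Q : Q * Qᴴ = 1 := by
  ext i j
  fin_cases i <;> fin_cases j <;>
    simp [Q, mul_apply, Fin.sum_univ_four, conjTranspose_apply] <;> ring_nf <;>
    simp [ofReal_sqrt_two_sq] <;> norm_num

lemma toMagicBasis_mul (M N : Matrix (Fin 4) (Fin 4) ℂ) :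
    toMagicBasis (M * N) = toMagicBasis M * toMagicBasis N := by
  simp only [toMagicBasis, Matrix.mul_assoc, ← Matrix.mul_assoc Q, Q_mul_conjTranspose_Q,
    Matrix.one_mul]

lemma toMagicBasis_exp (M : Matrix (Fin 4) (Fin 4) ℂ) :
    toMagicBasis (NormedSpace.exp M) = NormedSpace.exp (toMagicBasis M) := by
  have hinv : Q⁻¹ = Qᴴ := inv_eq_left_inv (mul_eq_one_comm.mp Q_mul_conjTranspose_Q)
  rw [toMagicBasis, toMagicBasis, ← hinv,
    exp_conj' Q M (IsUnit.of_mul_eq_one Qᴴ Q_mul_conjTranspose_Q)]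

lemma toMagicBasis_exp_smul {M : Matrix (Fin 4) (Fin 4) ℂ} {s : Fin 4 → ℂ}
    (hM : toMagicBasis M = diagonal s) (a : ℂ) :
    toMagicBasis (NormedSpace.exp (a • M)) = diagonal fun j => exp (a * s j) := by
  rw [toMagicBasis_exp, toMagicBasis, mul_smul_comm, smul_mul_assoc, ← toMagicBasis, hM,
    ← diagonal_smul, exp_diagonal, Pi.exp_def, exp_eq_exp_ℂ]
  rfl

lemma toMagicBasis_tensor_σx : toMagicBasis (tensor σx σx) = diagonal ![1, 1, -1, -1] := by
  ext i j
  fin_cases i <;> fin_cases j <;>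
    simp [toMagicBasis, Q, tensor, σx, finProdFinEquiv, Fin.divNat, Fin.modNat, mul_apply,
      Fin.sum_univ_four, conjTranspose_apply] <;> ring_nf <;> simp [ofReal_sqrt_two_sq]

lemma toMagicBasis_tensor_σy : toMagicBasis (tensor σy σy) = diagonal ![-1, 1, -1, 1] := by
  ext i j
  fin_cases i <;> fin_cases j <;>
    simp [toMagicBasis, Q, tensor, σy, finProdFinEquiv, Fin.divNat, Fin.modNat, mul_apply,
      Fin.sum_univ_four, conjTranspose_apply] <;> ring_nf <;> simp [ofReal_sqrt_two_sq]

lemma toMagicBasis_tensor_σz : toMagicBasis (tensor σz σz) = diagonal ![1, -1, -1, 1] := by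
  ext i j
  fin_cases i <;> fin_cases j <;>
    simp [toMagicBasis, Q, tensor, σz, finProdFinEquiv, Fin.divNat, Fin.modNat, mul_apply,
      Fin.sum_univ_four, conjTranspose_apply] <;> ring_nf <;> simp [ofReal_sqrt_two_sq]

def magicPhases (a b c : ℂ) : Fin 4 → ℂ := ![a - b + c, a + b - c, -a - b - c, -a + b + c]

lemma toMagicBasis_A (c1 c2 c3 : ℝ) :
    toMagicBasis (A c1 c2 c3) = diagonal fun j => exp (magicPhases c1 c2 c3 j / 2 * I) := by
  rw [A, toMagicBasis_mul, toMagicBasis_mul,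
    toMagicBasis_exp_smul toMagicBasis_tensor_σx, toMagicBasis_exp_smul toMagicBasis_tensor_σy,
    toMagicBasis_exp_smul toMagicBasis_tensor_σz, diagonal_mul_diagonal, diagonal_mul_diagonal]
  congr 1
  ext j
  fin_cases j <;> simp [magicPhases, ← exp_add] <;> ring_nf

lemma mInv_A (c1 c2 c3 : ℝ) :
    mInv (A c1 c2 c3) = diagonal fun j => exp (magicPhases c1 c2 c3 j * I) := by
  rw [mInv, ← toMagicBasis, toMagicBasis_A, diagonal_transpose, diagonal_mul_diagonal]
  simp only [← exp_add, ← add_mul, add_halves]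

lemma cos_eq_exp_mul_I (x : ℂ) : cos x = (exp (x * I) + (exp (x * I))⁻¹) / 2 := by
  rw [← exp_neg, ← neg_mul, ← two_cos]
  ring

lemma sin_eq_exp_mul_I (x : ℂ) : sin x = ((exp (x * I))⁻¹ - exp (x * I)) * I / 2 := by
  rw [← exp_neg, ← neg_mul, ← two_sin]
  ring

lemma sum_exp_magicPhases (a b c : ℂ) :
    ∑ j, exp (magicPhases a b c j * I) =
      4 * (cos a * cos b * cos c + I * (sin a * sin b * sin c)) := by
  simp only [Fin.sum_univ_four, magicPhases, cons_val]
  simp only [cos_eq_exp_mul_I, sin_eq_exp_mul_I, add_mul, sub_mul, neg_mul, exp_add, exp_sub,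
    exp_neg]
  generalize exp (a * I) = x, exp (b * I) = y, exp (c * I) = z
  linear_combination (-((x⁻¹ - x) * (y⁻¹ - y) * (z⁻¹ - z)) / 2 * (I ^ 2 - 1)) * I_sq

lemma sum_exp_magicPhases_sq (a b c : ℂ) :
    ((∑ j, exp (magicPhases a b c j * I)) ^ 2 - ∑ j, exp (magicPhases a b c j * I) ^ 2) / 4 =
      2 * (cos a ^ 2 + cos b ^ 2 + cos c ^ 2) - 3 := by
  simp only [Fin.sum_univ_four, magicPhases, cons_val]
  simp only [cos_eq_exp_mul_I, add_mul, sub_mul, neg_mul, exp_add, exp_sub, exp_neg]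
  field_simp
  ring

/-- Makhlin-type invariants of the canonical gate `A(c1, c2, c3)`:
`tr(m(A)) = 4(cos c1 cos c2 cos c3 + i sin c1 sin c2 sin c3)` and
`(tr(m(A))² - tr(m(A)²))/4 = 2(cos²c1 + cos²c2 + cos²c3) - 3`. -/
theorem stmt17 (c1 c2 c3 : ℝ) :
    (mInv (A c1 c2 c3)).trace =
      4 * (((Real.cos c1 * Real.cos c2 * Real.cos c3 : ℝ) : ℂ) +
        Complex.I * ((Real.sin c1 * Real.sin c2 * Real.sin c3 : ℝ) : ℂ)) ∧
    ((mInv (A c1 c2 c3)).trace ^ 2 - (mInv (A c1 c2 c3) * mInv (A c1 c2 c3)).trace) / 4 =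
      ((2 * (Real.cos c1 ^ 2 + Real.cos c2 ^ 2 + Real.cos c3 ^ 2) - 3 : ℝ) : ℂ) := by
  rw [mInv_A, diagonal_mul_diagonal, trace_diagonal, trace_diagonal]
  push_cast
  simp only [← sq]
  exact ⟨sum_exp_magicPhases _ _ _, sum_exp_magicPhases_sq _ _ _⟩
end
end
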